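/- arXiv:1609.01444 — 4 statements merged into one kernel-verified Lean document; each statement's English description precedes it below -/
import Mathlib

section
/- The set of bounded continuous functions x : ℝ≥0 → E (E a Banach space) satisfying lim_{t→∞} ‖x(t+ω) - x(t)‖ = 0, equipped with the sup norm ‖x‖_∞ = sup_{t≥0} ‖x(t)‖, is a closed subspace of the Banach space of bounded continuous functions, hence itself a Banach space. -/
open Filter
open scoped NNReal

theorem stmt_1 {E : Type*} [NormedAddCommGroup E] [NormedSpace ℝ E] [CompleteSpace E]
    (ω : ℝ≥0) (hω : 0 < ω) :
    IsClosed {x : BoundedContinuousFunction ℝ≥0 E |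
      Tendsto (fun t : ℝ≥0 => ‖x (t + ω) - x t‖) atTop (nhds 0)} := by
  apply IsSeqClosed.isClosed
  intro u x hu hx
  rw [Set.mem_setOf_eq, NormedAddCommGroup.tendsto_nhds_zero]
  intro ε hε
  obtain ⟨n, hn⟩ := Metric.tendsto_atTop.mp hx (ε / 3) (by linarith)
  have hd : dist (u n) x < ε / 3 := hn n le_rfl
  have hun := hu n
  rw [Set.mem_setOf_eq, NormedAddCommGroup.tendsto_nhds_zero] at hun
  filter_upwards [hun (ε / 3) (by linarith)] with t ht
  simp only [norm_norm] at ht ⊢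
  have h1 : ‖x (t + ω) - u n (t + ω)‖ < ε / 3 :=
    calc ‖x (t + ω) - u n (t + ω)‖ = dist (u n (t + ω)) (x (t + ω)) := by
          rw [dist_eq_norm, norm_sub_rev]
      _ ≤ dist (u n) x := BoundedContinuousFunction.dist_coe_le_dist _
      _ < ε / 3 := hd
  have h2 : ‖(u n) t - x t‖ < ε / 3 :=
    calc ‖u n t - x t‖ = dist (u n t) (x t) := (dist_eq_norm _ _).symm
      _ ≤ dist (u n) x := BoundedContinuousFunction.dist_coe_le_dist _
      _ < ε / 3 := hd
  calc ‖x (t + ω) - x t‖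
      = ‖(x (t + ω) - u n (t + ω)) + (u n (t + ω) - u n t) + (u n t - x t)‖ := by abel_nf
    _ ≤ ‖x (t + ω) - u n (t + ω)‖ + ‖u n (t + ω) - u n t‖ + ‖u n t - x t‖ := norm_add₃_le
    _ < ε / 3 + ε / 3 + ε / 3 := by gcongr
    _ = ε := by ring
end

section
/- Let f : ℝ≥0 × E → E be uniformly S-asymptotically ω-periodic on bounded sets (i.e., for every bounded set K ⊆ E, sup_{X∈K} ‖f(t+ω,X) - f(t,X)‖ → 0 as t → ∞) and globally Lipschitz in the second variable with constant L uniformly in t. Then for any bounded S-asymptotically ω-periodic function Y : ℝ≥0 → E, the function t ↦ f(t, Y(t)) is S-asymptotically ω-periodic. -/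
open Filter

theorem stmt_2 {E : Type*} [NormedAddCommGroup E] [NormedSpace ℝ E] [CompleteSpace E]
    (ω : ℝ) (hω : 0 < ω) (f : ℝ → E → E) (L : ℝ) (hL : 0 < L)
    (hunif : ∀ K : Set E, Bornology.IsBounded K → ∀ ε > 0, ∃ T : ℝ, ∀ t ≥ T, ∀ X ∈ K,
      ‖f (t + ω) X - f t X‖ < ε)
    (hlip : ∀ t : ℝ, 0 ≤ t → ∀ Y Z : E, ‖f t Y - f t Z‖ ≤ L * ‖Y - Z‖)
    (Y : ℝ → E) (hYbd : Bornology.IsBounded (Set.range Y))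
    (hY : Tendsto (fun t : ℝ => ‖Y (t + ω) - Y t‖) atTop (nhds 0)) :
    Tendsto (fun t : ℝ => ‖f (t + ω) (Y (t + ω)) - f t (Y t)‖) atTop (nhds 0) := by
  rw [Metric.tendsto_atTop]
  intro ε hε
  obtain ⟨T1, hT1⟩ := (Metric.tendsto_atTop.mp hY) (ε / (2 * L)) (by positivity)
  obtain ⟨T2, hT2⟩ := hunif (Set.range Y) hYbd (ε / 2) (by positivity)
  refine ⟨max (max T1 T2) 0, fun t ht => ?_⟩
  have ht0 : (0 : ℝ) ≤ t := le_trans (le_max_right _ _) ht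
  have ht1 : T1 ≤ t := le_trans (le_trans (le_max_left _ _) (le_max_left _ _)) ht
  have ht2 : T2 ≤ t := le_trans (le_trans (le_max_right _ _) (le_max_left _ _)) ht
  have h1 : ‖f (t + ω) (Y (t + ω)) - f (t + ω) (Y t)‖ < ε / 2 := by
    calc ‖f (t + ω) (Y (t + ω)) - f (t + ω) (Y t)‖
        ≤ L * ‖Y (t + ω) - Y t‖ := hlip (t + ω) (by linarith) _ _
      _ < L * (ε / (2 * L)) := by
          have := hT1 t ht1
          rw [Real.dist_eq] at this
          have h := abs_lt.mp this
          have hnn : (0:ℝ) ≤ ‖Y (t + ω) - Y t‖ := norm_nonneg _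
          nlinarith [h.2]
      _ = ε / 2 := by field_simp
  have h2 : ‖f (t + ω) (Y t) - f t (Y t)‖ < ε / 2 := hT2 t ht2 _ ⟨t, rfl⟩
  rw [Real.dist_eq, sub_zero, abs_of_nonneg (norm_nonneg _)]
  calc ‖f (t + ω) (Y (t + ω)) - f t (Y t)‖
      ≤ ‖f (t + ω) (Y (t + ω)) - f (t + ω) (Y t)‖ + ‖f (t + ω) (Y t) - f t (Y t)‖ :=
        norm_sub_le_norm_sub_add_norm_sub _ _ _
    _ < ε / 2 + ε / 2 := add_lt_add h1 h2
    _ = ε := by ring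
end

section
/- Let T : ℝ≥0 → ℝ be a measurable function with |T(t)| ≤ CM/(1 + |μ| t^α) for constants C, M > 0, μ < 0, α > 1, and let x : ℝ≥0 → E be a bounded continuous S-asymptotically ω-periodic function into a Banach space E. Then the convolution Γ(t) = ∫₀ᵗ T(t-s) x(s) ds is S-asymptotically ω-periodic, i.e., ‖Γ(t+ω) - Γ(t)‖ → 0 as t → ∞. -/
/-!
Substituting `u = t - s` writes `Γ(t) = ∫_{u ∈ (0, ∞)} 1_{u ≤ t} T(u) x(t - u) du`, so
`Γ(t + ω) - Γ(t)` is the integral over the half-line of a function that, for each fixed `u`,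
is eventually `T(u) (x(t - u + ω) - x(t - u))` and hence tends to `0`, and that is dominated by
`2 ‖x‖_∞ |T(u)|`. The decay bound with `α > 1` makes `T` integrable on the half-line, so
dominated convergence applies.
-/

open Filter MeasureTheory Set Topology

lemma integrableOn_Ioi_inv_one_add_mul_rpow {a α : ℝ} (ha : 0 < a) (hα : 1 < α) :
    IntegrableOn (fun t : ℝ => (1 + a * t ^ α)⁻¹) (Ioi 0) := by
  have hmeas : AEStronglyMeasurable (fun t : ℝ => (1 + a * t ^ α)⁻¹) := by fun_prop
  rw [← Ioc_union_Ioi_eq_Ioi zero_le_one]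
  refine IntegrableOn.union ?_ ?_
  · refine Measure.integrableOn_of_bounded (M := 1) measure_Ioc_lt_top.ne hmeas ?_
    filter_upwards [ae_restrict_mem measurableSet_Ioc] with t ht
    have : 0 ≤ a * t ^ α := by have := ht.1.le; positivity
    rw [Real.norm_of_nonneg (by positivity)]
    exact inv_le_one_of_one_le₀ (by linarith)
  · have hrpow := integrableOn_Ioi_rpow_of_lt (a := -α) (by linarith) one_pos
    refine (hrpow.const_mul a⁻¹).mono' hmeas.restrict ?_
    filter_upwards [ae_restrict_mem measurableSet_Ioi] with t ht
    have ht0 : 0 < t := one_pos.trans ht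
    rw [Real.norm_of_nonneg (by positivity), Real.rpow_neg ht0.le, ← mul_inv]
    exact inv_anti₀ (by positivity) (by linarith)

section

variable {E : Type*} [NormedAddCommGroup E] [NormedSpace ℝ E] {k : ℝ → ℝ} {y : ℝ → E}

lemma intervalIntegral_comp_sub_smul_eq_setIntegral_indicator {t : ℝ} (ht : 0 ≤ t) :
    ∫ s in (0:ℝ)..t, k (t - s) • y s
      = ∫ u in Ioi 0, (Iic t).indicator (fun u => k u • y (t - u)) u := by
  have h := intervalIntegral.integral_comp_sub_left (a := 0) (b := t)
    (fun u => k u • y (t - u)) t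
  simp only [sub_sub_cancel, sub_self, sub_zero] at h
  rw [h, intervalIntegral.integral_of_le ht, setIntegral_indicator measurableSet_Iic,
    Ioi_inter_Iic]

lemma integrableOn_Ioi_smul_comp_sub (hk : IntegrableOn k (Ioi 0)) (hyc : Continuous y)
    {B : ℝ} (hB : ∀ s, ‖y s‖ ≤ B) (t : ℝ) :
    IntegrableOn (fun u => k u • y (t - u)) (Ioi 0) := by
  refine (hk.norm.mul_const B).mono' (hk.aestronglyMeasurable.smul (by fun_prop)) ?_
  refine ae_of_all _ fun u => ?_
  rw [norm_smul]
  exact mul_le_mul_of_nonneg_left (hB _) (norm_nonneg _)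

theorem tendsto_intervalIntegral_comp_sub_smul_add_sub (ω : ℝ) (hk : IntegrableOn k (Ioi 0))
    (hyc : Continuous y) (hyb : Bornology.IsBounded (range y))
    (hy : Tendsto (fun t => y (t + ω) - y t) atTop (𝓝 0)) :
    Tendsto (fun t => (∫ s in (0:ℝ)..(t + ω), k (t + ω - s) • y s)
      - ∫ s in (0:ℝ)..t, k (t - s) • y s) atTop (𝓝 0) := by
  obtain ⟨B, hB⟩ := hyb.exists_norm_le
  replace hB : ∀ s, ‖y s‖ ≤ B := fun s => hB _ (mem_range_self s)
  set F : ℝ → ℝ → E := fun t u =>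
    (Iic (t + ω)).indicator (fun u => k u • y (t + ω - u)) u
      - (Iic t).indicator (fun u => k u • y (t - u)) u
  have hF_int : ∀ t, IntegrableOn (F t) (Ioi 0) := fun t =>
    ((integrableOn_Ioi_smul_comp_sub hk hyc hB _).indicator measurableSet_Iic).sub
      ((integrableOn_Ioi_smul_comp_sub hk hyc hB _).indicator measurableSet_Iic)
  have hF_bound : ∀ t u, ‖F t u‖ ≤ 2 * B * ‖k u‖ := by
    intro t u
    have hind : ∀ s r, ‖(Iic r).indicator (fun u => k u • y (s - u)) u‖ ≤ ‖k u‖ * B :=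
      fun s r => (norm_indicator_le_norm_self _ _).trans <| by
        rw [norm_smul]; exact mul_le_mul_of_nonneg_left (hB _) (norm_nonneg _)
    linarith [norm_sub_le_of_le (hind (t + ω) (t + ω)) (hind t t)]
  have hF_lim : ∀ u, Tendsto (fun t => F t u) atTop (𝓝 0) := by
    intro u
    have hshift : Tendsto (fun t => k u • (y (t - u + ω) - y (t - u))) atTop (𝓝 0) := by
      have hsub := tendsto_atTop_add_const_right atTop (-u) tendsto_id
      simpa [← sub_eq_add_neg] using (hy.comp hsub).const_smul (k u)
    refine hshift.congr' ?_
    filter_upwards [eventually_ge_atTop u, eventually_ge_atTop (u - ω)] with t h₁ h₂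
    have h₃ : u ≤ t + ω := by linarith
    simp only [F, indicator_of_mem (mem_Iic.2 h₁), indicator_of_mem (mem_Iic.2 h₃), smul_sub,
      sub_add_eq_add_sub]
  have hlim : Tendsto (fun t => ∫ u in Ioi 0, F t u) atTop (𝓝 0) := by
    simpa using tendsto_integral_filter_of_dominated_convergence _
      (Eventually.of_forall fun t => (hF_int t).aestronglyMeasurable)
      (Eventually.of_forall fun t => ae_of_all _ (hF_bound t)) (hk.norm.const_mul _)
      (ae_of_all _ hF_lim)
  refine hlim.congr' ?_
  filter_upwards [eventually_ge_atTop 0, eventually_ge_atTop (-ω)] with t h₁ h₂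
  rw [intervalIntegral_comp_sub_smul_eq_setIntegral_indicator h₁,
    intervalIntegral_comp_sub_smul_eq_setIntegral_indicator (by linarith : 0 ≤ t + ω),
    ← integral_sub ((integrableOn_Ioi_smul_comp_sub hk hyc hB _).indicator measurableSet_Iic)
      ((integrableOn_Ioi_smul_comp_sub hk hyc hB _).indicator measurableSet_Iic)]

end

theorem stmt_3_general {E : Type*} [NormedAddCommGroup E] [NormedSpace ℝ E]
    (ω : ℝ) (T : ℝ → ℝ) (hTmeas : Measurable T)
    (C M μ α : ℝ) (hμ : μ < 0) (hα : 1 < α)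
    (hT : ∀ t : ℝ, 0 ≤ t → |T t| ≤ C * M / (1 + |μ| * t ^ α))
    (x : ℝ → E) (hxc : Continuous x) (hxbd : Bornology.IsBounded (Set.range x))
    (hx : Tendsto (fun t : ℝ => ‖x (t + ω) - x t‖) atTop (nhds 0)) :
    Tendsto (fun t : ℝ =>
      ‖(∫ s in (0:ℝ)..(t + ω), T (t + ω - s) • x s) - ∫ s in (0:ℝ)..t, T (t - s) • x s‖)
      atTop (nhds 0) := by
  have hT_int : IntegrableOn T (Ioi 0) := by
    have hdom := integrableOn_Ioi_inv_one_add_mul_rpow (abs_pos.2 hμ.ne) hα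
    refine (hdom.const_mul (C * M)).mono' hTmeas.aestronglyMeasurable ?_
    filter_upwards [ae_restrict_mem measurableSet_Ioi] with t ht
    exact hT t ht.le
  exact tendsto_zero_iff_norm_tendsto_zero.1 <| tendsto_intervalIntegral_comp_sub_smul_add_sub ω
    hT_int hxc hxbd (tendsto_zero_iff_norm_tendsto_zero.2 hx)

theorem stmt_3 {E : Type*} [NormedAddCommGroup E] [NormedSpace ℝ E] [CompleteSpace E]
    (ω : ℝ) (hω : 0 < ω) (T : ℝ → ℝ) (hTmeas : Measurable T)
    (C M μ α : ℝ) (hC : 0 < C) (hM : 0 < M) (hμ : μ < 0) (hα : 1 < α)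
    (hT : ∀ t : ℝ, 0 ≤ t → |T t| ≤ C * M / (1 + |μ| * t ^ α))
    (x : ℝ → E) (hxc : Continuous x) (hxbd : Bornology.IsBounded (Set.range x))
    (hx : Tendsto (fun t : ℝ => ‖x (t + ω) - x t‖) atTop (nhds 0)) :
    Tendsto (fun t : ℝ =>
      ‖(∫ s in (0:ℝ)..(t + ω), T (t + ω - s) • x s) - ∫ s in (0:ℝ)..t, T (t - s) • x s‖)
      atTop (nhds 0) :=
  stmt_3_general ω T hTmeas C M μ α hμ hα hT x hxc hxbd hx
end

section
/- Let f : ℝ≥0 × E × E → E satisfy ‖f(t,x,y) - f(t,x₁,y₁)‖² ≤ L(‖x-x₁‖² + ‖y-y₁‖²) for all t, and suppose for every bounded set K ⊆ E × E, sup_{(x,y)∈K} ‖f(t+ω,x,y) - f(t,x,y)‖ → 0 as t → ∞. If X : ℝ≥0 → E is bounded and S-asymptotically ω-periodic with ω a positive integer, then t ↦ f(t, X(⌊t⌋), X(t)) is S-asymptotically ω-periodic. -/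
/-!
The difference `f (t + ω) (X (t + ω)) (Y (t + ω)) - f t (X t) (Y t)` splits into a change of the
time variable at fixed arguments, which is small uniformly on the bounded set `range X ×ˢ range Y`,
and a change of the arguments at fixed time, which the Lipschitz bound controls by the
S-asymptotic periodicity of `X` and `Y`. Since `⌊t + ω⌋ = ⌊t⌋ + ω` for integer `ω`, the function
`t ↦ X ⌊t⌋` inherits the S-asymptotic periodicity of `X` along `⌊t⌋ → ∞`.
-/

open Filter Topology

section

variable {E F G : Type*} [NormedAddCommGroup E] [NormedAddCommGroup F] [NormedAddCommGroup G]

def SAsymptoticallyPeriodic (X : ℝ → E) (ω : ℝ) : Prop :=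
  Tendsto (fun t => ‖X (t + ω) - X t‖) atTop (𝓝 0)

theorem tendsto_intCast_floor_atTop : Tendsto (fun t : ℝ => (⌊t⌋ : ℝ)) atTop atTop :=
  tendsto_atTop_mono (fun t => (Int.sub_one_lt_floor t).le)
    (tendsto_atTop_add_const_right _ (-1) tendsto_id)

theorem SAsymptoticallyPeriodic.comp_floor {X : ℝ → E} {ω : ℕ}
    (hX : SAsymptoticallyPeriodic X ω) : SAsymptoticallyPeriodic (fun t => X ⌊t⌋) ω := by
  refine (hX.comp tendsto_intCast_floor_atTop).congr fun t => ?_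
  simp only [Function.comp_apply, Int.floor_add_natCast, Int.cast_add, Int.cast_natCast]

theorem SAsymptoticallyPeriodic.comp_lipschitz {ω L : ℝ} {f : ℝ → E → F → G}
    (hlip : ∀ t : ℝ, 0 ≤ t → ∀ x y x₁ y₁,
      ‖f t x y - f t x₁ y₁‖ ^ 2 ≤ L * (‖x - x₁‖ ^ 2 + ‖y - y₁‖ ^ 2))
    (hunif : ∀ K : Set (E × F), Bornology.IsBounded K → ∀ ε > 0, ∃ T : ℝ, ∀ t ≥ T,
      ∀ p ∈ K, ‖f (t + ω) p.1 p.2 - f t p.1 p.2‖ < ε)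
    {X : ℝ → E} {Y : ℝ → F} (hXbd : Bornology.IsBounded (Set.range X))
    (hYbd : Bornology.IsBounded (Set.range Y))
    (hX : SAsymptoticallyPeriodic X ω) (hY : SAsymptoticallyPeriodic Y ω) :
    SAsymptoticallyPeriodic (fun t => f t (X t) (Y t)) ω := by
  have htime : Tendsto (fun t => ‖f (t + ω) (X (t + ω)) (Y (t + ω))
      - f t (X (t + ω)) (Y (t + ω))‖) atTop (𝓝 0) := by
    refine Metric.tendsto_atTop.2 fun ε hε => ?_
    obtain ⟨T, hT⟩ := hunif _ (hXbd.prod hYbd) ε hε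
    refine ⟨T, fun t ht => ?_⟩
    simpa using hT t ht (X (t + ω), Y (t + ω)) ⟨Set.mem_range_self _, Set.mem_range_self _⟩
  have hargs : Tendsto (fun t => √(L * (‖X (t + ω) - X t‖ ^ 2 + ‖Y (t + ω) - Y t‖ ^ 2)))
      atTop (𝓝 0) := by
    simpa using (((hX.pow 2).add (hY.pow 2)).const_mul L).sqrt
  refine squeeze_zero' (Eventually.of_forall fun t => norm_nonneg _) ?_
    (by simpa using htime.add hargs)
  filter_upwards [eventually_ge_atTop 0] with t ht
  calc ‖f (t + ω) (X (t + ω)) (Y (t + ω)) - f t (X t) (Y t)‖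
      ≤ ‖f (t + ω) (X (t + ω)) (Y (t + ω)) - f t (X (t + ω)) (Y (t + ω))‖
        + ‖f t (X (t + ω)) (Y (t + ω)) - f t (X t) (Y t)‖ :=
          norm_sub_le_norm_sub_add_norm_sub _ _ _
    _ ≤ _ := by
      gcongr
      exact Real.le_sqrt_of_sq_le (hlip t ht _ _ _ _)

end

theorem stmt_16_general {E : Type*} [NormedAddCommGroup E]
    (ω : ℕ) (f : ℝ → E → E → E) (L : ℝ)
    (hlip : ∀ t : ℝ, 0 ≤ t → ∀ x y x₁ y₁ : E,
      ‖f t x y - f t x₁ y₁‖ ^ 2 ≤ L * (‖x - x₁‖ ^ 2 + ‖y - y₁‖ ^ 2))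
    (hunif : ∀ K : Set (E × E), Bornology.IsBounded K → ∀ ε > 0, ∃ T : ℝ, ∀ t ≥ T,
      ∀ p ∈ K, ‖f (t + ω) p.1 p.2 - f t p.1 p.2‖ < ε)
    (X : ℝ → E) (hXbd : Bornology.IsBounded (Set.range X))
    (hX : Tendsto (fun t : ℝ => ‖X (t + ω) - X t‖) atTop (nhds 0)) :
    Tendsto (fun t : ℝ =>
      ‖f (t + ω) (X (⌊t + (ω : ℝ)⌋ : ℝ)) (X (t + ω)) - f t (X (⌊t⌋ : ℝ)) (X t)‖)
      atTop (nhds 0) := by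
  have hfloor_bd : Bornology.IsBounded (Set.range fun t : ℝ => X ⌊t⌋) :=
    hXbd.subset (Set.range_comp_subset_range _ X)
  exact SAsymptoticallyPeriodic.comp_lipschitz hlip hunif hfloor_bd hXbd
    (SAsymptoticallyPeriodic.comp_floor hX) hX

theorem stmt_16 {E : Type*} [NormedAddCommGroup E] [NormedSpace ℝ E] [CompleteSpace E]
    (ω : ℕ) (hω : 0 < ω) (f : ℝ → E → E → E) (L : ℝ) (hL : 0 < L)
    (hlip : ∀ t : ℝ, 0 ≤ t → ∀ x y x₁ y₁ : E,
      ‖f t x y - f t x₁ y₁‖ ^ 2 ≤ L * (‖x - x₁‖ ^ 2 + ‖y - y₁‖ ^ 2))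
    (hunif : ∀ K : Set (E × E), Bornology.IsBounded K → ∀ ε > 0, ∃ T : ℝ, ∀ t ≥ T,
      ∀ p ∈ K, ‖f (t + ω) p.1 p.2 - f t p.1 p.2‖ < ε)
    (X : ℝ → E) (hXbd : Bornology.IsBounded (Set.range X))
    (hX : Tendsto (fun t : ℝ => ‖X (t + ω) - X t‖) atTop (nhds 0)) :
    Tendsto (fun t : ℝ =>
      ‖f (t + ω) (X (⌊t + (ω : ℝ)⌋ : ℝ)) (X (t + ω)) - f t (X (⌊t⌋ : ℝ)) (X t)‖)
      atTop (nhds 0) :=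
  stmt_16_general ω f L hlip hunif X hXbd hX
end
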